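/- arXiv:1304.1575 — 2 statements merged into one kernel-verified Lean document; each statement's English description precedes it below -/
import Mathlib

section
/- Let X ⊆ ℝ^m be nonempty, closed, and convex, and let c : ℝ^m → ℝ^m be continuous on X. Then x* ∈ X is a neutrally stable state of (X, c) if and only if x* is a local minimum of (X, ⪯_c). -/
open Set

noncomputable section

/-- The path point `y_ε = ε x + (1 - ε) y`. -/
def pathPt {m : ℕ} (x y : EuclideanSpace ℝ (Fin m)) (ε : ℝ) :
    EuclideanSpace ℝ (Fin m) :=
  ε • x + (1 - ε) • y

/-- The linear vector polyorder `x ⪯_c y`: for all `ε ∈ [0,1]`,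
`⟨x, c(y_ε)⟩ ≤ ⟨y, c(y_ε)⟩`. -/
def vecLe {m : ℕ} (c : EuclideanSpace ℝ (Fin m) → EuclideanSpace ℝ (Fin m))
    (x y : EuclideanSpace ℝ (Fin m)) : Prop :=
  ∀ ε ∈ Icc (0:ℝ) 1,
    (inner ℝ x (c (pathPt x y ε)) : ℝ) ≤ inner ℝ y (c (pathPt x y ε))

/-- The strict part `x ≺_c y` of the linear vector polyorder. -/
def vecLt {m : ℕ} (c : EuclideanSpace ℝ (Fin m) → EuclideanSpace ℝ (Fin m))
    (x y : EuclideanSpace ℝ (Fin m)) : Prop :=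
  vecLe c x y ∧ ¬ vecLe c y x

/-- `x*` is a neutrally stable state of `(X, c)`: on some neighborhood of `x*`
relative to `X`, every `x` satisfies `⟨x*, c(x)⟩ ≤ ⟨x, c(x)⟩`. -/
def IsNSS {m : ℕ} (X : Set (EuclideanSpace ℝ (Fin m)))
    (c : EuclideanSpace ℝ (Fin m) → EuclideanSpace ℝ (Fin m))
    (xs : EuclideanSpace ℝ (Fin m)) : Prop :=
  ∃ O : Set (EuclideanSpace ℝ (Fin m)), O ⊆ X ∧ O ∈ nhdsWithin xs X ∧
    ∀ x ∈ O, (inner ℝ xs (c x) : ℝ) ≤ inner ℝ x (c x)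

/-- `x*` is a local minimum of `(X, ⪯_c)`: it weakly dominates every point of
some neighborhood of `x*` relative to `X`. -/
def IsLocalMinPolyorder {m : ℕ} (X : Set (EuclideanSpace ℝ (Fin m)))
    (c : EuclideanSpace ℝ (Fin m) → EuclideanSpace ℝ (Fin m))
    (xs : EuclideanSpace ℝ (Fin m)) : Prop :=
  ∃ O : Set (EuclideanSpace ℝ (Fin m)), O ⊆ X ∧ O ∈ nhdsWithin xs X ∧
    ∀ x ∈ O, vecLe c xs x

end

/-!
Write `y_ε = ε x* + (1 - ε) x`. Since `⟨y_ε, v⟩ = ε ⟨x*, v⟩ + (1 - ε) ⟨x, v⟩`, the stability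
inequality `⟨x*, c(y_ε)⟩ ≤ ⟨y_ε, c(y_ε)⟩` is `(1 - ε) ⟨x* - x, c(y_ε)⟩ ≤ 0`, i.e. the
polyorder inequality at `ε`, as long as `ε < 1`. For `x` in a convex neighborhood of `x*` on
which `x*` is stable the whole segment stays in that neighborhood, and the remaining case
`ε = 1` follows by continuity of `c`. Conversely, the polyorder inequality at `ε = 0` is the
stability inequality at `x`.
-/

open scoped RealInnerProductSpace

variable {m : ℕ}

theorem pathPt_zero (x y : EuclideanSpace ℝ (Fin m)) : pathPt x y 0 = y := by
  simp [pathPt]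

theorem continuous_pathPt (x y : EuclideanSpace ℝ (Fin m)) : Continuous (pathPt x y) := by
  unfold pathPt
  fun_prop

theorem Convex.pathPt_mem {s : Set (EuclideanSpace ℝ (Fin m))} (hs : Convex ℝ s)
    {x y : EuclideanSpace ℝ (Fin m)} (hx : x ∈ s) (hy : y ∈ s) {ε : ℝ} (hε : ε ∈ Icc (0:ℝ) 1) :
    pathPt x y ε ∈ s :=
  hs hx hy hε.1 (sub_nonneg.2 hε.2) (add_sub_cancel ε 1)

theorem inner_pathPt_left (x y v : EuclideanSpace ℝ (Fin m)) (ε : ℝ) :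
    ⟪pathPt x y ε, v⟫ = ε * ⟪x, v⟫ + (1 - ε) * ⟪y, v⟫ := by
  simp only [pathPt, inner_add_left, real_inner_smul_left]

theorem inner_le_inner_of_inner_le_inner_pathPt {x y v : EuclideanSpace ℝ (Fin m)} {ε : ℝ}
    (hε : ε < 1) (h : ⟪x, v⟫ ≤ ⟪pathPt x y ε, v⟫) : ⟪x, v⟫ ≤ ⟪y, v⟫ := by
  rw [inner_pathPt_left] at h
  nlinarith

theorem vecLe_of_forall_mem_Ico {c : EuclideanSpace ℝ (Fin m) → EuclideanSpace ℝ (Fin m)}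
    {x y : EuclideanSpace ℝ (Fin m)} (hc : ContinuousOn (fun ε ↦ c (pathPt x y ε)) (Icc 0 1))
    (h : ∀ ε ∈ Ico (0:ℝ) 1, ⟪x, c (pathPt x y ε)⟫ ≤ ⟪y, c (pathPt x y ε)⟫) :
    vecLe c x y := by
  have hcl : closure (Ico (0:ℝ) 1) = Icc 0 1 := closure_Ico zero_ne_one
  intro ε hε
  rw [← hcl] at hc hε
  exact le_on_closure h (continuousOn_const.inner hc) (continuousOn_const.inner hc) hε

theorem IsNSS.isLocalMinPolyorder {X : Set (EuclideanSpace ℝ (Fin m))} (hX : Convex ℝ X)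
    {c : EuclideanSpace ℝ (Fin m) → EuclideanSpace ℝ (Fin m)} (hc : ContinuousOn c X)
    {xs : EuclideanSpace ℝ (Fin m)} (hxs : xs ∈ X) (h : IsNSS X c xs) :
    IsLocalMinPolyorder X c xs := by
  obtain ⟨O, -, hO, hstable⟩ := h
  obtain ⟨r, hr, hballO⟩ := Metric.mem_nhdsWithin_iff.1 hO
  refine ⟨Metric.ball xs r ∩ X, inter_subset_right, ?_, fun x hx ↦ ?_⟩
  · rw [inter_comm]
    exact inter_mem_nhdsWithin X (Metric.ball_mem_nhds xs hr)
  have hpath : ∀ ε ∈ Icc (0:ℝ) 1, pathPt xs x ε ∈ Metric.ball xs r ∩ X := fun ε hε ↦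
    ((convex_ball xs r).inter hX).pathPt_mem ⟨Metric.mem_ball_self hr, hxs⟩ hx hε
  refine vecLe_of_forall_mem_Ico ?_ fun ε hε ↦ inner_le_inner_of_inner_le_inner_pathPt hε.2
    (hstable _ (hballO (hpath ε (Ico_subset_Icc_self hε))))
  exact hc.comp (continuous_pathPt xs x).continuousOn fun ε hε ↦ (hpath ε hε).2

theorem IsLocalMinPolyorder.isNSS {X : Set (EuclideanSpace ℝ (Fin m))}
    {c : EuclideanSpace ℝ (Fin m) → EuclideanSpace ℝ (Fin m)} {xs : EuclideanSpace ℝ (Fin m)}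
    (h : IsLocalMinPolyorder X c xs) : IsNSS X c xs := by
  obtain ⟨O, hOX, hO, hle⟩ := h
  refine ⟨O, hOX, hO, fun x hx ↦ ?_⟩
  simpa only [pathPt_zero] using hle x hx 0 (left_mem_Icc.2 zero_le_one)

theorem isNSS_iff_isLocalMinPolyorder_general {m : ℕ} (X : Set (EuclideanSpace ℝ (Fin m)))
    (hXconv : Convex ℝ X)
    (c : EuclideanSpace ℝ (Fin m) → EuclideanSpace ℝ (Fin m)) (hc : ContinuousOn c X)
    (xs : EuclideanSpace ℝ (Fin m)) (hxs : xs ∈ X) :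
    IsNSS X c xs ↔ IsLocalMinPolyorder X c xs :=
  ⟨IsNSS.isLocalMinPolyorder hXconv hc hxs, IsLocalMinPolyorder.isNSS⟩

/-- Neutrally stable states are exactly the local minima of `(X, ⪯_c)`. -/
theorem isNSS_iff_isLocalMinPolyorder {m : ℕ} (X : Set (EuclideanSpace ℝ (Fin m)))
    (hXne : X.Nonempty) (hXcl : IsClosed X) (hXconv : Convex ℝ X)
    (c : EuclideanSpace ℝ (Fin m) → EuclideanSpace ℝ (Fin m)) (hc : ContinuousOn c X)
    (xs : EuclideanSpace ℝ (Fin m)) (hxs : xs ∈ X) :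
    IsNSS X c xs ↔ IsLocalMinPolyorder X c xs :=
  isNSS_iff_isLocalMinPolyorder_general X hXconv c hc xs hxs
end

section
/- Let X ⊆ ℝ^m be nonempty, closed, and convex, and let c : ℝ^m → ℝ^m be continuous on X. If x* is a local minimum of (X, ⪯_c), then x* is a critical element of (X, c). -/
open Set

noncomputable section

/-! Only the endpoint `ε = 1` of the polyorder is needed: there the path point is `x*` itself,
so `x*` is a local minimizer on `X` of the linear functional `x ↦ ⟨x, c(x*)⟩`. A local minimizer
of a convex function on a convex set is a global one. -/

section

variable {m : ℕ} {c : EuclideanSpace ℝ (Fin m) → EuclideanSpace ℝ (Fin m)}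

@[simp]
lemma pathPt_one (x y : EuclideanSpace ℝ (Fin m)) : pathPt x y 1 = x := by
  simp [pathPt]

lemma vecLe.inner_le {x y : EuclideanSpace ℝ (Fin m)} (h : vecLe c x y) :
    inner ℝ x (c x) ≤ inner ℝ y (c x) := by
  simpa using h 1 (right_mem_Icc.mpr zero_le_one)

lemma IsLocalMinPolyorder.isLocalMinOn_inner {X : Set (EuclideanSpace ℝ (Fin m))}
    {xs : EuclideanSpace ℝ (Fin m)} (h : IsLocalMinPolyorder X c xs) :
    IsLocalMinOn (fun x ↦ inner ℝ x (c xs)) X xs := by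
  obtain ⟨O, -, hO, hmin⟩ := h
  exact Filter.mem_of_superset hO fun x hx ↦ (hmin x hx).inner_le

end

theorem isLocalMinPolyorder_isCritical_general {m : ℕ} (X : Set (EuclideanSpace ℝ (Fin m)))
    (hXconv : Convex ℝ X)
    (c : EuclideanSpace ℝ (Fin m) → EuclideanSpace ℝ (Fin m))
    (xs : EuclideanSpace ℝ (Fin m)) (hxs : xs ∈ X)
    (hlm : IsLocalMinPolyorder X c xs) :
    ∀ x ∈ X, (inner ℝ x (c xs) : ℝ) ≥ inner ℝ xs (c xs) :=
  IsMinOn.of_isLocalMinOn_of_convexOn hxs hlm.isLocalMinOn_inner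
    (((innerₗ _).flip (c xs)).convexOn hXconv)

/-- A local minimum of `(X, ⪯_c)` is a critical element of `(X, c)`. -/
theorem isLocalMinPolyorder_isCritical {m : ℕ} (X : Set (EuclideanSpace ℝ (Fin m)))
    (hXne : X.Nonempty) (hXcl : IsClosed X) (hXconv : Convex ℝ X)
    (c : EuclideanSpace ℝ (Fin m) → EuclideanSpace ℝ (Fin m)) (hc : ContinuousOn c X)
    (xs : EuclideanSpace ℝ (Fin m)) (hxs : xs ∈ X)
    (hlm : IsLocalMinPolyorder X c xs) :
    ∀ x ∈ X, (inner ℝ x (c xs) : ℝ) ≥ inner ℝ xs (c xs) :=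
  isLocalMinPolyorder_isCritical_general X hXconv c xs hxs hlm
end
end
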